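/- arXiv:0912.1540 — 3 statements merged into one kernel-verified Lean document; each statement's English description precedes it below -/
import Mathlib

section
/- For every real number t > 0, the real number x = cosh(t/6) + 1/2 satisfies 2x³ − 3x² + 1 − cosh²(t/4) = 0; that is, cosh(t/6) + 1/2 is the unique solution greater than 1 of the cubic equation 2x³ − 3x² + 1 = cosh²(t/4). -/
open Real

/-- For every real `t > 0`, the number `x = cosh(t/6) + 1/2` satisfies
`2x³ − 3x² + 1 − cosh²(t/4) = 0`, and it is the unique solution greater
than `1` of the cubic equation `2x³ − 3x² + 1 = cosh²(t/4)`. -/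
theorem stmt_4 (t : ℝ) (ht : 0 < t) :
    (1 < Real.cosh (t/6) + 1/2) ∧
    (2 * (Real.cosh (t/6) + 1/2)^3 - 3 * (Real.cosh (t/6) + 1/2)^2 + 1
      - (Real.cosh (t/4))^2 = 0) ∧
    (∀ y : ℝ, 1 < y → 2 * y^3 - 3 * y^2 + 1 = (Real.cosh (t/4))^2 →
      y = Real.cosh (t/6) + 1/2) := by
  set c := Real.cosh (t/6) with hc
  have hc1 : 1 ≤ c := Real.one_le_cosh _
  have h2 : Real.cosh (t/2) = 2 * (Real.cosh (t/4))^2 - 1 := by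
    have := Real.cosh_two_mul (t/4)
    have h : 2 * (t/4) = t/2 := by ring
    rw [h] at this
    nlinarith [this, Real.cosh_sq (t/4), Real.sinh_sq (t/4)]
  have h3 : Real.cosh (t/2) = 4 * c^3 - 3 * c := by
    have := Real.cosh_three_mul (t/6)
    have h : 3 * (t/6) = t/2 := by ring
    rw [h] at this
    linarith [this]
  have key : (Real.cosh (t/4))^2 = 2*c^3 - (3/2)*c + 1/2 := by linarith
  refine ⟨by linarith, by rw [key]; ring, ?_⟩
  intro y hy heq
  rw [key] at heq
  have hx1 : (1:ℝ) < c + 1/2 := by linarith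
  set x := c + 1/2 with hx
  have hfx : 2 * y^3 - 3*y^2 + 1 = 2*x^3 - 3*x^2 + 1 := by rw [hx]; linarith [heq]
  have hfac : (y - x) * (2*y^2 + 2*x*y + 2*x^2 - 3*y - 3*x) = 0 := by ring_nf; nlinarith [hfx]
  have hQ : 0 < 2*y^2 + 2*x*y + 2*x^2 - 3*y - 3*x := by nlinarith [mul_pos (sub_pos.mpr hy) (sub_pos.mpr hx1)]
  have := mul_eq_zero.mp hfac
  rcases this with h | h
  · linarith
  · linarith
end

section
/- For every real number t > 0 and every real number x > 1, if 2x³ − 3x² + 1 − cosh²(t/4) ≤ 0 then x ≤ cosh(t/6) + 1/2. -/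
open Real

/-- For every real `t > 0` and every real `x > 1`, if
`2x³ − 3x² + 1 − cosh²(t/4) ≤ 0` then `x ≤ cosh(t/6) + 1/2`. -/
theorem stmt_5 (t : ℝ) (ht : 0 < t) (x : ℝ) (hx : 1 < x)
    (h : 2 * x^3 - 3 * x^2 + 1 - (Real.cosh (t/4))^2 ≤ 0) :
    x ≤ Real.cosh (t/6) + 1/2 := by
  set c := Real.cosh (t/6) with hc
  have c1 : 1 ≤ c := Real.one_le_cosh _
  have e1 : Real.cosh (2*(t/4)) = 2 * Real.cosh (t/4)^2 - 1 := by
    rw [Real.cosh_two_mul]; have := Real.cosh_sq (t/4); linarith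
  have e2 : Real.cosh (3*(t/6)) = 4 * c^3 - 3*c := Real.cosh_three_mul _
  have heq : (2:ℝ)*(t/4) = 3*(t/6) := by ring
  have key : Real.cosh (t/4)^2 = (4*c^3 - 3*c + 1)/2 := by
    rw [heq] at e1; rw [e2] at e1; linarith
  rw [key] at h
  by_contra hcon
  push_neg at hcon
  have hd : 0 < x - (c + 1/2) := by linarith
  nlinarith [mul_pos hd (sub_pos.mpr hx), mul_pos hd (show (0:ℝ) < c + 1/2 - 1 by linarith), mul_pos hd (mul_pos (lt_trans one_pos hx) (show (0:ℝ) < c + 1/2 by linarith)), mul_pos hd hd]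
end

section
/- Let t > 0, d > 0 and let c, d' be real numbers satisfying cosh(c) = (cosh(t/2) + cosh²(d/2)) / sinh²(d/2) and cosh(d'/2) = cosh(c/2) · cosh(d/4). If d ≤ d', then cosh(d/2) ≤ cosh(t/6) + 1/2. -/
open Real

lemma cosh_half_sq (u : ℝ) : Real.cosh (u/2) ^ 2 = (Real.cosh u + 1) / 2 := by
  have h := Real.cosh_two_mul (u/2)
  have h2 : 2 * (u/2) = u := by ring
  rw [h2] at h
  have hs := Real.sinh_sq (u/2)
  linarith

lemma cosh_three_mul' (u : ℝ) :
    Real.cosh (3*u) = 4 * Real.cosh u ^ 3 - 3 * Real.cosh u := by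
  have h : (3:ℝ)*u = 2*u + u := by ring
  rw [h, Real.cosh_add, Real.cosh_two_mul, Real.sinh_two_mul]
  have hs := Real.sinh_sq u
  linear_combination (3 * Real.cosh u) * hs

/-- Let `t > 0`, `d > 0` and `c, d'` real with
`cosh c = (cosh(t/2) + cosh²(d/2)) / sinh²(d/2)` and
`cosh(d'/2) = cosh(c/2) · cosh(d/4)`. If `d ≤ d'`, then
`cosh(d/2) ≤ cosh(t/6) + 1/2`. -/
theorem stmt_8 (t d c d' : ℝ) (ht : 0 < t) (hd : 0 < d)
    (hc : Real.cosh c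
      = (Real.cosh (t/2) + (Real.cosh (d/2))^2) / (Real.sinh (d/2))^2)
    (hd' : Real.cosh (d'/2) = Real.cosh (c/2) * Real.cosh (d/4))
    (hdd' : d ≤ d') :
    Real.cosh (d/2) ≤ Real.cosh (t/6) + 1/2 := by
  set x := Real.cosh (d/2) with hxdef
  set y := Real.cosh (t/6) with hydef
  have hx : 1 < x := by
    rw [hxdef]
    exact Real.one_lt_cosh.mpr (by positivity)
  have hy : 1 ≤ y := Real.one_le_cosh _
  have hs : Real.sinh (d/2) ^ 2 = x ^ 2 - 1 := by
    have := Real.cosh_sq (d/2); linarith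
  have hx2 : (0:ℝ) < x ^ 2 - 1 := by nlinarith
  have hcoshc : Real.cosh c * (x ^ 2 - 1) = Real.cosh (t/2) + x ^ 2 := by
    rw [hc, hs]
    field_simp
  -- monotonicity
  have hmono : x ≤ Real.cosh (d'/2) := by
    rw [hxdef]
    apply Real.cosh_le_cosh.mpr
    rw [abs_of_pos (by linarith), abs_of_pos (by linarith)]
    linarith
  have hxd' : x ≤ Real.cosh (c/2) * Real.cosh (d/4) := by
    rw [← hd']; exact hmono
  have hsq : x ^ 2 ≤ Real.cosh (c/2) ^ 2 * Real.cosh (d/4) ^ 2 := by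
    have hx0 : (0:ℝ) ≤ x := by linarith
    nlinarith [hxd', Real.cosh_pos (c/2), Real.cosh_pos (d/4)]
  have hch : Real.cosh (c/2) ^ 2 = (Real.cosh c + 1) / 2 := cosh_half_sq c
  have hdh : Real.cosh (d/4) ^ 2 = (x + 1) / 2 := by
    have h := cosh_half_sq (d/2)
    have h2 : d/2/2 = d/4 := by ring
    rw [h2] at h
    rw [h, hxdef]
  rw [hch, hdh] at hsq
  -- key cubic inequality
  have hkey : 4 * x ^ 3 - 6 * x ^ 2 + 1 ≤ Real.cosh (t/2) := by
    nlinarith [hsq, hcoshc, hx2, hx]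
  -- triple angle
  have htri : Real.cosh (t/2) = 4 * y ^ 3 - 3 * y := by
    have h := cosh_three_mul' (t/6)
    have h2 : 3 * (t/6) = t/2 := by ring
    rw [h2] at h
    rw [h, hydef]
  rw [htri] at hkey
  by_contra hcon
  push_neg at hcon
  have h1 : 0 < x - y - 1/2 := by linarith
  nlinarith [hkey, hy, mul_pos h1 h1, mul_pos (mul_pos h1 h1) h1,
    mul_nonneg h1.le (sub_nonneg.mpr hy), mul_nonneg (mul_nonneg h1.le h1.le) (sub_nonneg.mpr hy),
    mul_nonneg (mul_nonneg h1.le (sub_nonneg.mpr hy)) (sub_nonneg.mpr hy)]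
end
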